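/- arXiv:math/0607088 — 7 statements merged into one kernel-verified Lean document; each statement's English description precedes it below -/
import Mathlib

section
/- Let T ⊆ X be a subset of the vertex set of a finite tree on X, with |T| even. For an edge x∼y of the tree, deleting it partitions X into X_x and X_y; call the edge T-odd if |T ∩ X_x| is odd. Then the set of T-odd edges of the tree is a T-join, i.e., a vertex z ∈ X is incident to an odd number of T-odd edges if and only if z ∈ T. -/
open scoped Classical

/-- The vertex set of the component of `x` after deleting the edge `x∼y` from the graph `G`. -/
def sideSet {X : Type*} (G : SimpleGraph X) (x y : X) : Set X :=
  {z | (G.deleteEdges {s(x, y)}).Reachable x z}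

/-! In a tree, `w` lies on the `y`-side of an edge `z∼y` exactly when the unique path from `z`
to `w` starts with the step to `y`. Hence the `y`-sides, for `y` a neighbour of `z`, partition
`X \ {z}`, and the `z`-side of `z∼y` is the complement of the `y`-side. Since `|T|` is even,
`z∼y` is `T`-odd iff `|T ∩ X_y|` is odd, so the number of `T`-odd edges at `z` has the parity
of `∑_y |T ∩ X_y| = |T \ {z}|`, which is odd iff `z ∈ T`. -/

lemma Set.odd_ncard_inter_iff_odd_ncard_sdiff {α : Type*} {s : Set α} (hs : s.Finite)
    (he : Even s.ncard) (t : Set α) : Odd (s ∩ t).ncard ↔ Odd (s \ t).ncard := by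
  rw [← Set.ncard_inter_add_ncard_sdiff_eq_ncard s t hs, Nat.even_add] at he
  rw [← Nat.not_even_iff_odd, ← Nat.not_even_iff_odd, he]

lemma Set.odd_ncard_sdiff_singleton_iff {α : Type*} {s : Set α} (hs : s.Finite)
    (he : Even s.ncard) (a : α) : Odd (s \ {a}).ncard ↔ a ∈ s := by
  by_cases ha : a ∈ s
  · rw [← Set.ncard_sdiff_singleton_add_one ha hs, Nat.even_add_one, Nat.not_even_iff_odd] at he
    exact iff_of_true he ha
  · rw [Set.sdiff_singleton_eq_self ha, ← Nat.not_even_iff_odd]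
    exact iff_of_false (not_not.mpr he) ha

namespace SimpleGraph

variable {X : Type*} {G : SimpleGraph X} {z y w : X}

lemma reachable_deleteEdges_of_snd_ne (hG : G.IsAcyclic) (hzy : G.Adj z y) {p : G.Walk z w}
    (hp : p.IsPath) (hsnd : p.snd ≠ y) : (G.deleteEdges {s(z, y)}).Reachable z w := by
  refine reachable_deleteEdges_iff_exists_walk.mpr ⟨p, fun he ↦ hsnd ?_⟩
  exact (hG.eq_snd_of_adj_start hp hzy (p.snd_mem_support_of_mem_edges he)).symm

lemma reachable_deleteEdges_of_snd_eq (hzy : G.Adj z y) {p : G.Walk z w} (hp : p.IsPath)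
    (hsnd : p.snd = y) : (G.deleteEdges {s(y, z)}).Reachable y w := by
  cases p with
  | nil => exact absurd hsnd hzy.ne
  | cons _ q =>
    rw [Walk.snd_cons] at hsnd
    subst hsnd
    have hz : z ∉ q.support := (Walk.cons_isPath_iff _ _).mp hp |>.2
    exact reachable_deleteEdges_iff_exists_walk.mpr
      ⟨q, fun he ↦ hz (q.snd_mem_support_of_mem_edges he)⟩

lemma not_reachable_deleteEdges_of_reachable (hG : G.IsAcyclic) (hzy : G.Adj z y)
    (hz : (G.deleteEdges {s(z, y)}).Reachable z w) :
    ¬ (G.deleteEdges {s(z, y)}).Reachable y w :=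
  fun hy ↦ isBridge_iff.mp (isAcyclic_iff_forall_adj_isBridge.mp hG hzy) (hz.trans hy.symm)

lemma mem_sideSet_iff_snd_eq (hG : G.IsAcyclic) (hzy : G.Adj z y) {p : G.Walk z w}
    (hp : p.IsPath) : w ∈ sideSet G y z ↔ p.snd = y := by
  refine ⟨fun hy ↦ by_contra fun hsnd ↦ ?_, reachable_deleteEdges_of_snd_eq hzy hp⟩
  rw [sideSet, Set.mem_ofPred_eq, Sym2.eq_swap] at hy
  exact not_reachable_deleteEdges_of_reachable hG hzy
    (reachable_deleteEdges_of_snd_ne hG hzy hp hsnd) hy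

lemma mem_sideSet_iff_snd_ne (hG : G.IsAcyclic) (hzy : G.Adj z y) {p : G.Walk z w}
    (hp : p.IsPath) : w ∈ sideSet G z y ↔ p.snd ≠ y := by
  refine ⟨fun hz hsnd ↦ ?_, reachable_deleteEdges_of_snd_ne hG hzy hp⟩
  have hy := reachable_deleteEdges_of_snd_eq hzy hp hsnd
  rw [Sym2.eq_swap] at hy
  exact not_reachable_deleteEdges_of_reachable hG hzy hz hy

lemma IsAcyclic.self_notMem_sideSet (hG : G.IsAcyclic) (hzy : G.Adj z y) :
    z ∉ sideSet G y z :=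
  (mem_sideSet_iff_snd_eq hG hzy Walk.IsPath.nil).not.mpr hzy.ne

lemma IsTree.sideSet_eq_compl (hG : G.IsTree) (hzy : G.Adj z y) :
    sideSet G z y = (sideSet G y z)ᶜ := by
  ext w
  obtain ⟨p, hp, -⟩ := hG.existsUnique_path z w
  rw [Set.mem_compl_iff, mem_sideSet_iff_snd_ne hG.isAcyclic hzy hp,
    mem_sideSet_iff_snd_eq hG.isAcyclic hzy hp]

lemma IsTree.ncard_sdiff_singleton_eq_sum_ncard_inter_sideSet [Fintype X] (hG : G.IsTree)
    (T : Set X) (z : X) :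
    (T \ {z}).ncard = ∑ y ∈ G.neighborFinset z, (T ∩ sideSet G y z).ncard := by
  choose p hp using fun w ↦ (hG.existsUnique_path z w).exists
  have hmaps : ((T \ {z}).toFinset : Set X).MapsTo (fun w ↦ (p w).snd) (G.neighborFinset z) := by
    intro w hw
    simp only [Set.coe_toFinset, Set.mem_sdiff, Set.mem_singleton_iff] at hw
    simpa using Walk.adj_snd (Walk.not_nil_of_ne (Ne.symm hw.2))
  rw [Set.ncard_eq_toFinset_card', Finset.card_eq_sum_card_fiberwise hmaps]
  refine Finset.sum_congr rfl fun y hy ↦ ?_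
  have hzy : G.Adj z y := (mem_neighborFinset _ _ _).mp hy
  have hz := hG.isAcyclic.self_notMem_sideSet hzy
  rw [Set.ncard_eq_toFinset_card']
  congr 1
  ext w
  simp only [Finset.mem_filter, Set.mem_toFinset, Set.mem_sdiff, Set.mem_inter_iff,
    Set.mem_singleton_iff, ← mem_sideSet_iff_snd_eq hG.isAcyclic hzy (hp w)]
  grind

end SimpleGraph

/-- In a finite tree on `X`, with `T ⊆ X` of even cardinality, the `T`-odd edges form a
`T`-join: a vertex `z` is incident to an odd number of `T`-odd tree edges iff `z ∈ T`. -/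
theorem stmt_2 {X : Type*} [Fintype X] (G : SimpleGraph X) (hG : G.IsTree)
    (T : Set X) (hT : Even T.ncard) (z : X) :
    Odd {y | G.Adj z y ∧ Odd (T ∩ sideSet G z y).ncard}.ncard ↔ z ∈ T := by
  have hflip : ∀ y, G.Adj z y →
      (Odd (T ∩ sideSet G z y).ncard ↔ Odd (T ∩ sideSet G y z).ncard) := fun y hy ↦ by
    rw [hG.sideSet_eq_compl hy, ← Set.sdiff_eq,
      ← Set.odd_ncard_inter_iff_odd_ncard_sdiff T.toFinite hT]
  have hset : {y | G.Adj z y ∧ Odd (T ∩ sideSet G z y).ncard} =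
      ↑{y ∈ G.neighborFinset z | Odd (T ∩ sideSet G y z).ncard} := by
    ext y
    simp +contextual [hflip]
  rw [hset, Set.ncard_coe_finset, ← Finset.odd_sum_iff_odd_card_odd,
    ← hG.ncard_sdiff_singleton_eq_sum_ncard_inter_sideSet,
    Set.odd_ncard_sdiff_singleton_iff T.toFinite hT]
end

section
/- Let T ⊆ X with |T| even, and let a tree on X be given with its T-odd edges defined as above. If U ⊆ X is T-odd (|T ∩ U| is odd), then the number of T-odd tree edges with exactly one endpoint in U is odd; in particular, at least one T-odd tree edge crosses U. -/
open scoped Classical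

/-!
Deleting a tree edge `xy` splits the vertices into the two sides `sideSet G x y` and
`sideSet G y x`, so when `|T|` is even the parity `c u v := |T ∩ sideSet G u v| mod 2` does not
depend on the orientation of the edge. Around a vertex `u` the sides `sideSet G v u` of its
neighbours `v` partition the other vertices, whence `∑_{v ∼ u} c u v = [u ∈ T]`. Summing over
`u ∈ U`, every edge inside `U` is counted once in each direction and cancels, so the number of
`T`-odd edges leaving `U` has the parity of `|T ∩ U|`, which is odd.
-/

lemma ZMod.natCast_ncard_setOf_and_odd {α : Type*} [Fintype α] (P : α → Prop) [DecidablePred P]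
    (n : α → ℕ) :
    ({a | P a ∧ Odd (n a)}.ncard : ZMod 2) = ∑ a with P a, (n a : ZMod 2) := by
  rw [Set.ncard_eq_toFinset_card', Set.toFinset_ofPred, ← Finset.filter_filter,
    Finset.natCast_card_filter]
  refine Finset.sum_congr rfl fun a _ => ?_
  by_cases h : Odd (n a) <;> simp [h, CharTwo.natCast_eq_ite, Nat.not_even_iff_odd]

namespace SimpleGraph

variable {V : Type*} {G : SimpleGraph V} {u v w x y z : V}

lemma Reachable.mem_of_forall_adj {s : Set V} (h : G.Reachable u v)
    (hs : ∀ a b, G.Adj a b → a ∈ s → b ∈ s) (hu : u ∈ s) : v ∈ s := by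
  obtain ⟨p⟩ := h
  induction p with
  | nil => exact hu
  | cons hadj _ ih => exact ih (hs _ _ hadj hu)

theorem sum_adj_fst_mem_eq_sum_adj_snd_notMem [Fintype V] {M : Type*} [AddCommGroup M]
    {f : V → V → M} (hf : ∀ ⦃u v⦄, G.Adj u v → f v u = -f u v) (s : Set V) :
    ∑ p : V × V with G.Adj p.1 p.2 ∧ p.1 ∈ s, f p.1 p.2 =
      ∑ p : V × V with G.Adj p.1 p.2 ∧ p.1 ∈ s ∧ p.2 ∉ s, f p.1 p.2 := by
  have hinside : ∑ p : V × V with G.Adj p.1 p.2 ∧ p.1 ∈ s ∧ p.2 ∈ s, f p.1 p.2 = 0 := by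
    refine Finset.sum_involution (fun p _ => p.swap) (fun p hp => ?_) (fun p hp _ hswap => ?_)
      (fun p hp => ?_) (fun p _ => p.swap_swap)
    · simp only [Finset.mem_filter] at hp
      rw [Prod.fst_swap, Prod.snd_swap, hf hp.2.1, add_neg_cancel]
    · simp only [Finset.mem_filter] at hp
      exact hp.2.1.ne (congrArg Prod.fst hswap).symm
    · simp only [Finset.mem_filter, Finset.mem_univ, true_and] at hp ⊢
      exact ⟨hp.1.symm, hp.2.2, hp.2.1⟩
  rw [← Finset.sum_filter_add_sum_filter_not _ (fun p : V × V => p.2 ∈ s), Finset.filter_filter,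
    Finset.filter_filter]
  simp only [and_assoc, hinside, zero_add]

lemma mem_sideSet_iff : z ∈ sideSet G x y ↔ ∃ p : G.Walk x z, s(x, y) ∉ p.edges :=
  reachable_deleteEdges_iff_exists_walk

lemma mem_sideSet_swap : z ∈ sideSet G y x ↔ (G.deleteEdges {s(x, y)}).Reachable y z := by
  rw [sideSet, Set.mem_ofPred_eq, Sym2.eq_swap]

lemma self_mem_sideSet (x y : V) : x ∈ sideSet G x y := Reachable.rfl

lemma mem_sideSet_or_of_adj {a b : V} (ha : a ∈ sideSet G x y) (hab : G.Adj a b) :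
    b ∈ sideSet G x y ∨ b ∈ sideSet G y x := by
  by_cases he : s(a, b) = s(x, y)
  · rcases Sym2.eq_iff.mp he with ⟨-, rfl⟩ | ⟨-, rfl⟩
    · exact Or.inr (self_mem_sideSet _ _)
    · exact Or.inl (self_mem_sideSet _ _)
  · exact Or.inl (Reachable.trans ha (deleteEdges_adj.mpr ⟨hab, he⟩).reachable)

lemma Preconnected.mem_sideSet_or (hG : G.Preconnected) (x y z : V) :
    z ∈ sideSet G x y ∨ z ∈ sideSet G y x := by
  refine (hG x z).mem_of_forall_adj (s := sideSet G x y ∪ sideSet G y x) ?_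
    (Or.inl (self_mem_sideSet x y))
  rintro a b hab (ha | ha)
  · exact mem_sideSet_or_of_adj ha hab
  · exact (mem_sideSet_or_of_adj ha hab).symm

lemma IsAcyclic.disjoint_sideSet (hG : G.IsAcyclic) (h : G.Adj x y) :
    Disjoint (sideSet G x y) (sideSet G y x) := by
  refine Set.disjoint_left.mpr fun z hx hy => ?_
  rw [mem_sideSet_swap] at hy
  exact isAcyclic_iff_forall_adj_isBridge.mp hG h (hx.trans hy.symm)

lemma IsTree.isCompl_sideSet (hG : G.IsTree) (h : G.Adj x y) :
    IsCompl (sideSet G x y) (sideSet G y x) :=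
  ⟨hG.isAcyclic.disjoint_sideSet h, codisjoint_iff.mpr <| Set.eq_univ_of_forall fun z =>
    hG.connected.preconnected.mem_sideSet_or x y z⟩

lemma IsAcyclic.sideSet_subset_sideSet (hG : G.IsAcyclic) (huv : G.Adj u v) (hvw : v ≠ w) :
    sideSet G v u ⊆ sideSet G u w := by
  intro t ht
  obtain ⟨p, hp⟩ := mem_sideSet_iff.mp ht
  have hu : u ∉ p.support := fun hu =>
    isAcyclic_iff_forall_adj_isBridge.mp hG huv.symm <| mem_sideSet_iff.mpr
      ⟨p.takeUntil u hu, fun he => hp (p.edges_takeUntil_subset_edges hu he)⟩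
  refine mem_sideSet_iff.mpr ⟨.cons huv p, ?_⟩
  rw [Walk.edges_cons, List.mem_cons, not_or]
  exact ⟨fun he => hvw (Sym2.congr_right.mp he).symm,
    fun he => hu (p.fst_mem_support_of_mem_edges he)⟩

lemma IsAcyclic.pairwiseDisjoint_sideSet (hG : G.IsAcyclic) (u : V) :
    (G.neighborSet u).PairwiseDisjoint (sideSet G · u) := fun _ hv _ hw hvw =>
  (hG.disjoint_sideSet hw).mono_left (hG.sideSet_subset_sideSet hv hvw)

lemma IsTree.biUnion_sideSet (hG : G.IsTree) (u : V) :
    ⋃ v ∈ G.neighborSet u, sideSet G v u = {u}ᶜ := by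
  ext t
  simp only [Set.mem_iUnion, mem_neighborSet, exists_prop, Set.mem_compl_singleton_iff]
  constructor
  · rintro ⟨v, huv, ht⟩ rfl
    exact Set.disjoint_left.mp (hG.isAcyclic.disjoint_sideSet huv) (self_mem_sideSet t v) ht
  · intro htu
    obtain ⟨p, hp⟩ := (hG.connected u t).exists_isPath
    cases p with
    | nil => exact absurd rfl htu
    | @cons _ v _ huv q =>
      rw [Walk.cons_isPath_iff] at hp
      exact ⟨v, huv, mem_sideSet_iff.mpr
        ⟨q, fun he => hp.2 (q.snd_mem_support_of_mem_edges he)⟩⟩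

variable [Fintype V]

lemma IsTree.ncard_inter_sideSet_add (hG : G.IsTree) (h : G.Adj x y) (T : Set V) :
    (T ∩ sideSet G x y).ncard + (T ∩ sideSet G y x).ncard = T.ncard := by
  rw [← (hG.isCompl_sideSet h).compl_eq, ← Set.sdiff_eq]
  exact Set.ncard_inter_add_ncard_sdiff_eq_ncard T _

lemma IsTree.natCast_ncard_inter_sideSet_comm (hG : G.IsTree) {T : Set V} (hT : Even T.ncard)
    (h : G.Adj x y) :
    ((T ∩ sideSet G x y).ncard : ZMod 2) = (T ∩ sideSet G y x).ncard := by
  rw [← CharTwo.add_eq_zero, ← Nat.cast_add, hG.ncard_inter_sideSet_add h,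
    ZMod.natCast_eq_zero_iff_even]
  exact hT

lemma IsTree.sum_ncard_inter_sideSet (hG : G.IsTree) (T : Set V) (u : V) :
    ∑ v ∈ G.neighborFinset u, (T ∩ sideSet G v u).ncard = (T \ {u}).ncard := by
  rw [← finsum_mem_coe_finset, coe_neighborFinset, Set.sdiff_eq, ← hG.biUnion_sideSet u,
    Set.inter_iUnion₂, (Set.toFinite _).ncard_biUnion (fun _ _ => Set.toFinite _)
      ((hG.isAcyclic.pairwiseDisjoint_sideSet u).mono_on fun _ _ => Set.inter_subset_right)]

lemma IsTree.sum_natCast_ncard_inter_sideSet (hG : G.IsTree) {T : Set V} (hT : Even T.ncard)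
    (u : V) :
    ∑ v ∈ G.neighborFinset u, ((T ∩ sideSet G u v).ncard : ZMod 2) = if u ∈ T then 1 else 0 := by
  rw [Finset.sum_congr rfl fun v hv =>
      hG.natCast_ncard_inter_sideSet_comm hT ((mem_neighborFinset _ _ _).mp hv),
    ← Nat.cast_sum, hG.sum_ncard_inter_sideSet]
  split_ifs with hu
  · rw [Set.ncard_sdiff_singleton_of_mem hu, Nat.cast_sub ((Set.ncard_pos).mpr ⟨u, hu⟩),
      ZMod.natCast_eq_zero_iff_even.mpr hT]
    simp
  · rw [Set.sdiff_singleton_eq_self hu, ZMod.natCast_eq_zero_iff_even]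
    exact hT

end SimpleGraph

/-- If `U` is `T`-odd, then the number of `T`-odd tree edges crossing `U` (recorded with
their endpoint in `U` first) is odd; in particular some `T`-odd tree edge crosses `U`. -/
theorem stmt_3 {X : Type*} [Fintype X] (G : SimpleGraph X) (hG : G.IsTree)
    (T : Set X) (hT : Even T.ncard) (U : Set X) (hU : Odd (T ∩ U).ncard) :
    Odd {p : X × X | G.Adj p.1 p.2 ∧ p.1 ∈ U ∧ p.2 ∉ U ∧
        Odd (T ∩ sideSet G p.1 p.2).ncard}.ncard ∧
    ∃ x y : X, G.Adj x y ∧ x ∈ U ∧ y ∉ U ∧ Odd (T ∩ sideSet G x y).ncard := by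
  set c : X → X → ZMod 2 := fun u v => ((T ∩ sideSet G u v).ncard : ZMod 2)
  have hc : ∀ ⦃u v⦄, G.Adj u v → c v u = -c u v := fun u v h => by
    simp only [c, CharTwo.neg_eq, hG.natCast_ncard_inter_sideSet_comm hT h]
  have hodd : Odd {p : X × X | G.Adj p.1 p.2 ∧ p.1 ∈ U ∧ p.2 ∉ U ∧
      Odd (T ∩ sideSet G p.1 p.2).ncard}.ncard := by
    rw [← ZMod.natCast_eq_one_iff_odd]
    calc _ = ∑ p : X × X with G.Adj p.1 p.2 ∧ p.1 ∈ U ∧ p.2 ∉ U, c p.1 p.2 := by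
          simpa only [and_assoc] using
            ZMod.natCast_ncard_setOf_and_odd (fun p : X × X => G.Adj p.1 p.2 ∧ p.1 ∈ U ∧ p.2 ∉ U)
              (fun p => (T ∩ sideSet G p.1 p.2).ncard)
      _ = ∑ p : X × X with G.Adj p.1 p.2 ∧ p.1 ∈ U, c p.1 p.2 :=
          (SimpleGraph.sum_adj_fst_mem_eq_sum_adj_snd_notMem hc U).symm
      _ = ∑ u with u ∈ U, ∑ v ∈ G.neighborFinset u, c u v :=
          Finset.sum_finset_product' _ _ _ fun p => by simp [and_comm]
      _ = ∑ u with u ∈ U, if u ∈ T then 1 else 0 :=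
          Finset.sum_congr rfl fun u _ => hG.sum_natCast_ncard_inter_sideSet hT u
      _ = ((T ∩ U).ncard : ZMod 2) := by
          rw [Finset.sum_boole, Finset.filter_filter, Set.ncard_eq_toFinset_card']
          congr 2
          ext u
          simp [and_comm]
      _ = 1 := ZMod.natCast_eq_one_iff_odd.mpr hU
  obtain ⟨⟨x, y⟩, hx, hxy, hy, hxyT⟩ := Set.nonempty_of_ncard_ne_zero hodd.pos.ne'
  exact ⟨hodd, x, y, hx, hxy, hy, hxyT⟩
end

section
/- (Padberg–Rinaldi computation of β(U)) Let U ⊆ V be fixed and let F₀ := {e ∈ δ(U) : c'_e < c_e}. If |T ∩ U| + |F₀| is odd, then β(U) := min{β(U,F) : F ⊆ δ(U), |T∩U|+|F| odd} equals β(U, F₀) = ∑_{e∈δ(U)} min(c_e, c'_e). If |T ∩ U| + |F₀| is even and δ(U) ≠ ∅, then β(U) = ∑_{e∈δ(U)} min(c_e, c'_e) + min_{f∈δ(U)} |c_f − c'_f|, attained at the symmetric difference F₀ Δ {f} for f minimizing |c_f − c'_f| over δ(U). -/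
/-!
Write `F₀` for the set of edges `e` of the cut with `c' e < c e`. Each edge `e` of the cut
contributes `c' e` to `β(U, F)` if `e ∈ F` and `c e` otherwise, which is
`min (c e) (c' e)` plus `|c e - c' e|` exactly when `e ∈ F ∆ F₀`. Hence
`β(U, F) = ∑ min (c e) (c' e) + ∑_{e ∈ F ∆ F₀} |c e - c' e|`, so `F₀` is a global minimiser.
If `F₀` has the wrong parity, every admissible `F` differs from `F₀` in some edge `g`, and
so costs at least `|c g - c' g|` more; flipping a single edge `f` minimising `|c f - c' f|`
fixes the parity at exactly that cost.
-/

open scoped Classical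

/-- The set of edges of `E` with exactly one endpoint in `U`. -/
noncomputable def cutEdges {V : Type*} [Fintype V] [DecidableEq V]
    (E : Finset (V × V)) (U : Finset V) : Finset (V × V) :=
  E.filter (fun e => (e.1 ∈ U ∧ e.2 ∉ U) ∨ (e.1 ∉ U ∧ e.2 ∈ U))

namespace Finset

variable {α : Type*} [DecidableEq α]

theorem card_symmDiff_add_two_mul_card_inter (s t : Finset α) :
    #(symmDiff s t) + 2 * #(s ∩ t) = #s + #t := by
  rw [symmDiff_eq_sup_sdiff_inf, sup_eq_union, inf_eq_inter,
    card_sdiff_of_subset inter_subset_union, ← card_union_add_card_inter]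
  have := card_le_card (inter_subset_union (s := s) (t := t))
  omega

theorem symmDiff_subset_of_subset {s t u : Finset α} (hs : s ⊆ u) (ht : t ⊆ u) :
    symmDiff s t ⊆ u :=
  symmDiff_le_sup.trans (sup_le hs ht)

theorem odd_add_card_symmDiff_singleton_iff (n : ℕ) (s : Finset α) (a : α) :
    Odd (n + #(symmDiff s {a})) ↔ ¬Odd (n + #s) := by
  have hsum := card_symmDiff_add_two_mul_card_inter s {a}
  rw [card_singleton] at hsum
  simp only [Nat.odd_iff]
  omega

end Finset

open Finset

/-- The set `F₀` for the cut `D = δ(U)`. -/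
def cheapEdges {α R : Type*} [LinearOrder R] (c c' : α → R) (D : Finset α) : Finset α :=
  D.filter fun e => c' e < c e

theorem cheapEdges_subset {α R : Type*} [LinearOrder R] (c c' : α → R) (D : Finset α) :
    cheapEdges c c' D ⊆ D :=
  filter_subset _ _

section BlossomCost

variable {α R : Type*} [DecidableEq α] [AddCommGroup R] [LinearOrder R] [IsOrderedAddMonoid R]
  (c c' : α → R) (D : Finset α)

/-- `β(U, F)` for the cut `D = δ(U)`. -/
def blossomCost (F : Finset α) : R :=
  ∑ e ∈ D \ F, c e + ∑ e ∈ F, c' e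

theorem ite_eq_min_add_abs (x y : R) (p : Prop) [Decidable p] :
    (if p then y else x) = min x y + if ¬(p ↔ y < x) then |x - y| else 0 := by
  rcases lt_or_ge y x with h | h
  · by_cases hp : p
    · simp [hp, h, min_eq_right h.le]
    · simp [hp, h, min_eq_right h.le, abs_of_pos (sub_pos.mpr h)]
  · by_cases hp : p
    · simp [hp, not_lt.mpr h, min_eq_left h, abs_of_nonpos (sub_nonpos.mpr h)]
    · simp [hp, not_lt.mpr h, min_eq_left h]

theorem blossomCost_eq_sum_min_add {F : Finset α} (hF : F ⊆ D) :
    blossomCost c c' D F =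
      ∑ e ∈ D, min (c e) (c' e) + ∑ e ∈ symmDiff F (cheapEdges c c' D), |c e - c' e| := by
  have hsymm := symmDiff_subset_of_subset hF (cheapEdges_subset c c' D)
  have hcost : blossomCost c c' D F = ∑ e ∈ D, if e ∈ F then c' e else c e := by
    rw [sum_ite, filter_mem_eq_inter, inter_eq_right.mpr hF, filter_notMem_eq_sdiff,
      blossomCost, add_comm]
  rw [hcost, ← inter_eq_right.mpr hsymm, ← sum_ite_mem, ← sum_add_distrib]
  refine sum_congr rfl fun e he => ?_
  rw [ite_eq_min_add_abs]
  simp only [cheapEdges, mem_symmDiff, mem_filter, he, true_and]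
  exact congrArg₂ _ rfl (if_congr (by tauto) rfl rfl)

variable {c c'}

theorem blossomCost_cheapEdges :
    blossomCost c c' D (cheapEdges c c' D) = ∑ e ∈ D, min (c e) (c' e) := by
  rw [blossomCost_eq_sum_min_add c c' D (cheapEdges_subset c c' D), symmDiff_self, bot_eq_empty,
    sum_empty, add_zero]

theorem blossomCost_symmDiff_cheapEdges_singleton {f : α} (hf : f ∈ D) :
    blossomCost c c' D (symmDiff (cheapEdges c c' D) {f}) =
      ∑ e ∈ D, min (c e) (c' e) + |c f - c' f| := by
  have hsub := symmDiff_subset_of_subset (cheapEdges_subset c c' D) (singleton_subset_iff.mpr hf)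
  rw [blossomCost_eq_sum_min_add c c' D hsub, symmDiff_comm, symmDiff_symmDiff_cancel_left,
    sum_singleton]

theorem blossomCost_cheapEdges_le {F : Finset α} (hF : F ⊆ D) :
    blossomCost c c' D (cheapEdges c c' D) ≤ blossomCost c c' D F := by
  rw [blossomCost_cheapEdges, blossomCost_eq_sum_min_add c c' D hF]
  exact le_add_of_nonneg_right (sum_nonneg fun e _ => abs_nonneg _)

theorem exists_add_abs_le_blossomCost {F : Finset α} (hF : F ⊆ D)
    (hne : F ≠ cheapEdges c c' D) :
    ∃ g ∈ D, ∑ e ∈ D, min (c e) (c' e) + |c g - c' g| ≤ blossomCost c c' D F := by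
  obtain ⟨g, hg⟩ : (symmDiff F (cheapEdges c c' D)).Nonempty := by
    rwa [nonempty_iff_ne_empty, ← bot_eq_empty, Ne, symmDiff_eq_bot]
  refine ⟨g, symmDiff_subset_of_subset hF (cheapEdges_subset c c' D) hg, ?_⟩
  rw [blossomCost_eq_sum_min_add c c' D hF]
  gcongr
  exact single_le_sum (fun e _ => abs_nonneg (c e - c' e)) hg

end BlossomCost

theorem stmt_6_general {V : Type*} [Fintype V] [DecidableEq V]
    (E : Finset (V × V)) (c c' : V × V → ℚ)
    (T U : Finset V) :
    (Odd ((T ∩ U).card + ((cutEdges E U).filter (fun e => c' e < c e)).card) →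
      ((cutEdges E U \ (cutEdges E U).filter (fun e => c' e < c e)).sum c +
          ((cutEdges E U).filter (fun e => c' e < c e)).sum c' =
        (cutEdges E U).sum (fun e => min (c e) (c' e))) ∧
      ∀ F ⊆ cutEdges E U, Odd ((T ∩ U).card + F.card) →
        (cutEdges E U \ (cutEdges E U).filter (fun e => c' e < c e)).sum c +
            ((cutEdges E U).filter (fun e => c' e < c e)).sum c' ≤
          (cutEdges E U \ F).sum c + F.sum c') ∧
    (¬ Odd ((T ∩ U).card + ((cutEdges E U).filter (fun e => c' e < c e)).card) →
      (cutEdges E U).Nonempty →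
      ∃ f ∈ cutEdges E U, (∀ g ∈ cutEdges E U, |c f - c' f| ≤ |c g - c' g|) ∧
        Odd ((T ∩ U).card + (symmDiff ((cutEdges E U).filter (fun e => c' e < c e)) {f}).card) ∧
        ((cutEdges E U \ symmDiff ((cutEdges E U).filter (fun e => c' e < c e)) {f}).sum c +
            (symmDiff ((cutEdges E U).filter (fun e => c' e < c e)) {f}).sum c' =
          (cutEdges E U).sum (fun e => min (c e) (c' e)) + |c f - c' f|) ∧
        ∀ F ⊆ cutEdges E U, Odd ((T ∩ U).card + F.card) →
          (cutEdges E U \ symmDiff ((cutEdges E U).filter (fun e => c' e < c e)) {f}).sum c +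
              (symmDiff ((cutEdges E U).filter (fun e => c' e < c e)) {f}).sum c' ≤
            (cutEdges E U \ F).sum c + F.sum c') := by
  set D := cutEdges E U
  refine ⟨fun _ => ⟨blossomCost_cheapEdges D, fun F hF _ => blossomCost_cheapEdges_le D hF⟩,
    fun hpar hne => ?_⟩
  obtain ⟨f, hfD, hfmin⟩ := D.exists_min_image (fun e => |c e - c' e|) hne
  have hcost : blossomCost c c' D (symmDiff (cheapEdges c c' D) {f}) =
      ∑ e ∈ D, min (c e) (c' e) + |c f - c' f| :=
    blossomCost_symmDiff_cheapEdges_singleton D hfD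
  refine ⟨f, hfD, hfmin, (odd_add_card_symmDiff_singleton_iff _ _ _).mpr hpar, hcost,
    fun F hF hodd => ?_⟩
  obtain ⟨g, hgD, hg⟩ :=
    exists_add_abs_le_blossomCost (c := c) (c' := c') D hF fun h => hpar (by rwa [h] at hodd)
  calc blossomCost c c' D (symmDiff (cheapEdges c c' D) {f})
      ≤ ∑ e ∈ D, min (c e) (c' e) + |c g - c' g| := by
        rw [hcost]; exact add_le_add le_rfl (hfmin g hgD)
    _ ≤ blossomCost c c' D F := hg

/-- (Padberg–Rinaldi.)  Computation of `β(U) = min_F β(U,F)`.  With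
`F₀ := {e ∈ δ(U) : c'_e < c_e}`: if `|T∩U| + |F₀|` is odd then `F₀` attains the minimum
and `β(U) = ∑_{e∈δ(U)} min(c_e,c'_e)`; otherwise (with `δ(U) ≠ ∅`) the minimum is
`∑ min(c,c') + min_{f∈δ(U)} |c_f − c'_f|`, attained at `F₀ Δ {f}`. -/
theorem stmt_6 {V : Type*} [Fintype V] [DecidableEq V]
    (E : Finset (V × V)) (c c' : V × V → ℚ)
    (hc : ∀ e, 0 ≤ c e) (hc' : ∀ e, 0 ≤ c' e) (T U : Finset V) :
    (Odd ((T ∩ U).card + ((cutEdges E U).filter (fun e => c' e < c e)).card) →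
      ((cutEdges E U \ (cutEdges E U).filter (fun e => c' e < c e)).sum c +
          ((cutEdges E U).filter (fun e => c' e < c e)).sum c' =
        (cutEdges E U).sum (fun e => min (c e) (c' e))) ∧
      ∀ F ⊆ cutEdges E U, Odd ((T ∩ U).card + F.card) →
        (cutEdges E U \ (cutEdges E U).filter (fun e => c' e < c e)).sum c +
            ((cutEdges E U).filter (fun e => c' e < c e)).sum c' ≤
          (cutEdges E U \ F).sum c + F.sum c') ∧
    (¬ Odd ((T ∩ U).card + ((cutEdges E U).filter (fun e => c' e < c e)).card) →
      (cutEdges E U).Nonempty →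
      ∃ f ∈ cutEdges E U, (∀ g ∈ cutEdges E U, |c f - c' f| ≤ |c g - c' g|) ∧
        Odd ((T ∩ U).card + (symmDiff ((cutEdges E U).filter (fun e => c' e < c e)) {f}).card) ∧
        ((cutEdges E U \ symmDiff ((cutEdges E U).filter (fun e => c' e < c e)) {f}).sum c +
            (symmDiff ((cutEdges E U).filter (fun e => c' e < c e)) {f}).sum c' =
          (cutEdges E U).sum (fun e => min (c e) (c' e)) + |c f - c' f|) ∧
        ∀ F ⊆ cutEdges E U, Odd ((T ∩ U).card + F.card) →
          (cutEdges E U \ symmDiff ((cutEdges E U).filter (fun e => c' e < c e)) {f}).sum c +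
              (symmDiff ((cutEdges E U).filter (fun e => c' e < c e)) {f}).sum c' ≤
            (cutEdges E U \ F).sum c + F.sum c') :=
  stmt_6_general E c c' T U
end

section
/- Let T' be the symmetric difference of T with the endpoint-pairs of all edges e with c'_e < c_e (i.e., T' := T Δ (Δ_{e=uv: c'_e<c_e} {u,v}), computed as iterated symmetric difference of endpoint sets). Then for every U ⊆ V, the set U is T'-odd if and only if |T ∩ U| + |F₀| is odd, where F₀ := {e ∈ δ(U): c'_e < c_e}. Consequently, if U is T'-odd then β(U) = w(δ(U)) with w = min(c,c'). -/
open scoped Classical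

/-- `T' = T Δ (Δ_{e : c'_e < c_e} {endpoints of e})`: a vertex lies in `T'` iff its
membership in `T` is toggled by an odd number of edges `e` with `c'_e < c_e` incident
to it. -/
noncomputable def Tprime {V : Type*} [Fintype V] [DecidableEq V]
    (E : Finset (V × V)) (c c' : V × V → ℚ) (T : Finset V) : Finset V :=
  Finset.univ.filter (fun v =>
    Xor' (v ∈ T)
      (Odd (((E.filter (fun e => c' e < c e)).filter (fun e => e.1 = v ∨ e.2 = v)).card)))

lemma cast_odd_iff (n : ℕ) : Odd n ↔ (n : ZMod 2) = 1 := by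
  rw [Nat.odd_iff, ← ZMod.natCast_mod n 2]
  rcases Nat.mod_two_eq_zero_or_one n with h | h <;> rw [h] <;> decide

lemma cast_even_iff (n : ℕ) : Even n ↔ (n : ZMod 2) = 0 := by
  rw [ZMod.natCast_eq_zero_iff, even_iff_two_dvd]

/-- `U` is `T'`-odd iff `|T ∩ U| + |F₀|` is odd (`F₀ := {e ∈ δ(U) : c'_e < c_e}`);
consequently a `T'`-odd set `U` has `β(U) = w(δ(U))` with `w = min(c,c')`. -/
theorem stmt_8 {V : Type*} [Fintype V] [DecidableEq V]
    (E : Finset (V × V)) (c c' : V × V → ℚ)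
    (hc : ∀ e, 0 ≤ c e) (hc' : ∀ e, 0 ≤ c' e)
    (hloop : ∀ e ∈ E, e.1 ≠ e.2) (T : Finset V) (U : Finset V) :
    (Odd ((Tprime E c c' T ∩ U).card) ↔
      Odd ((T ∩ U).card + ((cutEdges E U).filter (fun e => c' e < c e)).card)) ∧
    (Odd ((Tprime E c c' T ∩ U).card) →
      (∃ F ⊆ cutEdges E U, Odd ((T ∩ U).card + F.card) ∧
        (cutEdges E U \ F).sum c + F.sum c' =
          (cutEdges E U).sum (fun e => min (c e) (c' e))) ∧
      ∀ F ⊆ cutEdges E U, Odd ((T ∩ U).card + F.card) →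
        (cutEdges E U).sum (fun e => min (c e) (c' e)) ≤
          (cutEdges E U \ F).sum c + F.sum c') := by
  set Ec := E.filter (fun e => c' e < c e) with hEc
  set dd : V → ℕ := fun v => (Ec.filter (fun e => e.1 = v ∨ e.2 = v)).card with hdd
  have hTpU : Tprime E c c' T ∩ U =
      U.filter (fun v => Xor' (v ∈ T) (Odd (dd v))) := by
    ext v
    simp only [Tprime, Finset.mem_inter, Finset.mem_filter, Finset.mem_univ, true_and, hdd,
      hEc]
    tauto
  -- main mod-2 computation
  have key : (((Tprime E c c' T ∩ U).card : ZMod 2)) =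
      ((T ∩ U).card : ZMod 2) + (((cutEdges E U).filter (fun e => c' e < c e)).card : ZMod 2) := by
    rw [hTpU, Finset.card_filter]
    push_cast
    have step1 : ∀ v ∈ U, ((if Xor' (v ∈ T) (Odd (dd v)) then (1:ZMod 2) else 0)) =
        (if v ∈ T then (1:ZMod 2) else 0) + (dd v : ZMod 2) := by
      intro v _
      rcases Nat.even_or_odd (dd v) with h | h
      · rw [(cast_even_iff _).1 h]
        have h' : ¬ Odd (dd v) := (Nat.not_odd_iff_even).2 h
        by_cases hv : v ∈ T <;> simp [Xor', hv, h'] <;> decide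
      · rw [(cast_odd_iff _).1 h]
        by_cases hv : v ∈ T <;> simp [Xor', hv, h] <;> decide
    rw [Finset.sum_congr rfl step1, Finset.sum_add_distrib]
    congr 1
    · rw [Finset.sum_boole, Finset.filter_mem_eq_inter, Finset.inter_comm]
    · -- ∑ v in U, (dd v : ZMod 2) = card of F₀
      have expand : ∀ v, (dd v : ZMod 2) =
          ∑ e ∈ Ec, (if e.1 = v ∨ e.2 = v then (1:ZMod 2) else 0) := by
        intro v
        rw [hdd, Finset.sum_boole]
      rw [Finset.sum_congr rfl (fun v _ => expand v), Finset.sum_comm]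
      have pere : ∀ e ∈ Ec, (∑ v ∈ U, (if e.1 = v ∨ e.2 = v then (1:ZMod 2) else 0)) =
          (if (e.1 ∈ U ∧ e.2 ∉ U) ∨ (e.1 ∉ U ∧ e.2 ∈ U) then (1:ZMod 2) else 0) := by
        intro e he
        have hne : e.1 ≠ e.2 := hloop e (Finset.mem_of_mem_filter e he)
        have split : ∀ v ∈ U, (if e.1 = v ∨ e.2 = v then (1:ZMod 2) else 0) =
            (if e.1 = v then (1:ZMod 2) else 0) + (if e.2 = v then (1:ZMod 2) else 0) := by
          intro v _
          by_cases h1 : e.1 = v <;> by_cases h2 : e.2 = v <;>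
            simp [h1, h2] <;> exact absurd (h1.trans h2.symm) hne
        rw [Finset.sum_congr rfl split, Finset.sum_add_distrib,
          Finset.sum_ite_eq U e.1 (fun _ => (1:ZMod 2)),
          Finset.sum_ite_eq U e.2 (fun _ => (1:ZMod 2))]
        by_cases h1 : e.1 ∈ U <;> by_cases h2 : e.2 ∈ U <;> simp [h1, h2] <;> decide
      rw [Finset.sum_congr rfl pere, Finset.sum_boole]
      congr 2
      rw [hEc, cutEdges, Finset.filter_filter, Finset.filter_filter]
      congr 1
      ext e
      tauto
  have part1 : (Odd ((Tprime E c c' T ∩ U).card) ↔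
      Odd ((T ∩ U).card + ((cutEdges E U).filter (fun e => c' e < c e)).card)) := by
    rw [cast_odd_iff, cast_odd_iff, Nat.cast_add, key]
  refine ⟨part1, fun h => ⟨?_, ?_⟩⟩
  · refine ⟨(cutEdges E U).filter (fun e => c' e < c e), Finset.filter_subset _ _,
      part1.1 h, ?_⟩
    have hsd : cutEdges E U \ (cutEdges E U).filter (fun e => c' e < c e) =
        (cutEdges E U).filter (fun e => ¬ c' e < c e) := (Finset.filter_not _ _).symm
    have h1 : ((cutEdges E U).filter (fun e => c' e < c e)).sum c' =
        ((cutEdges E U).filter (fun e => c' e < c e)).sum (fun e => min (c e) (c' e)) :=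
      Finset.sum_congr rfl fun e he =>
        (min_eq_right (le_of_lt (Finset.mem_filter.1 he).2)).symm
    have h2 : ((cutEdges E U).filter (fun e => ¬ c' e < c e)).sum c =
        ((cutEdges E U).filter (fun e => ¬ c' e < c e)).sum (fun e => min (c e) (c' e)) :=
      Finset.sum_congr rfl fun e he =>
        (min_eq_left (le_of_not_gt (Finset.mem_filter.1 he).2)).symm
    rw [hsd, h1, h2, add_comm, Finset.sum_filter_add_sum_filter_not]
  · intro F hF _
    rw [← Finset.sum_sdiff hF (f := fun e => min (c e) (c' e))]
    exact add_le_add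
      (Finset.sum_le_sum fun e _ => min_le_left _ _)
      (Finset.sum_le_sum fun e _ => min_le_right _ _)
end

section
/- Key inequality in the correctness proof: let U ⊆ V minimize β, suppose |T ∩ U| + |{e ∈ δ(U): c'_e < c_e}| is even, let f ∈ δ(U) minimize |c_f − c'_f| over δ(U), and let S be any set with f ∈ δ(S) and w(δ(S)) ≤ w(δ(U)) where w = min(c,c'). Then β(S) ≤ β(U), i.e., S is also a minimizer of β. -/
open scoped Classical


section helpers
variable {α : Type*} [DecidableEq α] (c c' : α → ℚ)

lemma val_split {D F : Finset α} (h : F ⊆ D) :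
    (D \ F).sum c + F.sum c' = ∑ e ∈ D, (if e ∈ F then c' e else c e) := by
  rw [Finset.sum_ite]
  have h1 : D.filter (· ∈ F) = F := by
    rw [Finset.filter_mem_eq_inter, Finset.inter_eq_right.mpr h]
  have h2 : D.filter (fun e => e ∉ F) = D \ F := (Finset.sdiff_eq_filter D F).symm
  rw [h1, h2, add_comm]

lemma min_add_abs (x y : ℚ) : min x y + |x - y| = max x y := by
  rcases le_total x y with h | h
  · rw [min_eq_left h, max_eq_right h, abs_of_nonpos (by linarith)]; ring
  · rw [min_eq_right h, max_eq_left h, abs_of_nonneg (by linarith)]; ring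

lemma val_F0 (D : Finset α) :
    ∑ e ∈ D, (if e ∈ D.filter (fun e => c' e < c e) then c' e else c e)
      = ∑ e ∈ D, min (c e) (c' e) := by
  refine Finset.sum_congr rfl fun e he => ?_
  simp only [Finset.mem_filter, he, true_and]
  split_ifs with h
  · rw [min_eq_right h.le]
  · rw [min_eq_left (not_lt.mp h)]

lemma val_ge (D F : Finset α) (g : α) (hg : g ∈ D)
    (hgmax : (if g ∈ F then c' g else c g) = max (c g) (c' g)) :
    ∑ e ∈ D, min (c e) (c' e) + |c g - c' g| ≤ ∑ e ∈ D, (if e ∈ F then c' e else c e) := by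
  rw [← Finset.add_sum_erase D (fun e => if e ∈ F then c' e else c e) hg,
    ← Finset.add_sum_erase D (fun e => min (c e) (c' e)) hg, hgmax,
    add_right_comm, min_add_abs]
  gcongr with e he
  split_ifs
  · exact min_le_right _ _
  · exact min_le_left _ _

lemma val_toggle (D F : Finset α) (f : α) (hfD : f ∈ D)
    (hF : ∀ e ∈ D, e ≠ f → (e ∈ F ↔ c' e < c e))
    (hfF : (if f ∈ F then c' f else c f) = max (c f) (c' f)) :
    ∑ e ∈ D, (if e ∈ F then c' e else c e) = ∑ e ∈ D, min (c e) (c' e) + |c f - c' f| := by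
  rw [← Finset.add_sum_erase D (fun e => if e ∈ F then c' e else c e) hfD,
    ← Finset.add_sum_erase D (fun e => min (c e) (c' e)) hfD, hfF,
    add_right_comm, min_add_abs]
  congr 1
  refine Finset.sum_congr rfl fun e he => ?_
  have he' := Finset.mem_of_mem_erase he
  have hne := Finset.ne_of_mem_erase he
  by_cases h : c' e < c e
  · rw [if_pos ((hF e he' hne).mpr h), min_eq_right h.le]
  · rw [if_neg (fun hh => h ((hF e he' hne).mp hh)), min_eq_left (not_lt.mp h)]

end helpers

/-- Key inequality of the correctness proof: if `U` minimizes `β`, the parity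
`|T∩U| + |F₀|` is even, `f ∈ δ(U)` minimizes `|c_f − c'_f|`, and `S` is any set with
`f ∈ δ(S)` and `w(δ(S)) ≤ w(δ(U))`, then `β(S) ≤ β(U)`, so `S` is also a minimizer. -/
theorem stmt_10 {V : Type*} [Fintype V] [DecidableEq V]
    (E : Finset (V × V)) (c c' : V × V → ℚ)
    (hc : ∀ e, 0 ≤ c e) (hc' : ∀ e, 0 ≤ c' e) (T : Finset V)
    (U : Finset V)
    (hUmin : ∀ U' F', F' ⊆ cutEdges E U' → Odd ((T ∩ U').card + F'.card) →
      ∃ F ⊆ cutEdges E U, Odd ((T ∩ U).card + F.card) ∧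
        (cutEdges E U \ F).sum c + F.sum c' ≤ (cutEdges E U' \ F').sum c + F'.sum c')
    (heven : ¬ Odd ((T ∩ U).card + ((cutEdges E U).filter (fun e => c' e < c e)).card))
    (f : V × V) (hf : f ∈ cutEdges E U)
    (hfmin : ∀ g ∈ cutEdges E U, |c f - c' f| ≤ |c g - c' g|)
    (S : Finset V) (hfS : f ∈ cutEdges E S)
    (hwS : (cutEdges E S).sum (fun e => min (c e) (c' e)) ≤
      (cutEdges E U).sum (fun e => min (c e) (c' e))) :
    ∀ U' F', F' ⊆ cutEdges E U' → Odd ((T ∩ U').card + F'.card) →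
      ∃ F ⊆ cutEdges E S, Odd ((T ∩ S).card + F.card) ∧
        (cutEdges E S \ F).sum c + F.sum c' ≤ (cutEdges E U' \ F').sum c + F'.sum c' := by
  intro U' F' hF' hodd
  obtain ⟨FU, hFU, hFUodd, hFUle⟩ := hUmin U' F' hF' hodd
  set DU := cutEdges E U with hDU
  set DS := cutEdges E S with hDS
  set F0U := DU.filter (fun e => c' e < c e) with hF0U
  set F0S := DS.filter (fun e => c' e < c e) with hF0S
  -- find g where FU and F0U disagree
  have hne : FU ≠ F0U := fun h => heven (h ▸ hFUodd)
  obtain ⟨g, hg⟩ : ∃ g, ¬(g ∈ FU ↔ g ∈ F0U) := by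
    by_contra h
    push_neg at h
    exact hne (Finset.ext h)
  have hgD : g ∈ DU := by
    by_cases h1 : g ∈ FU
    · exact hFU h1
    · exact Finset.filter_subset _ _ ((not_iff.mp hg).mp h1)
  have hgmax : (if g ∈ FU then c' g else c g) = max (c g) (c' g) := by
    by_cases h1 : g ∈ FU
    · have h2 : g ∉ F0U := fun h => hg ⟨fun _ => h, fun _ => h1⟩
      have h3 : ¬ c' g < c g := fun h => h2 (Finset.mem_filter.mpr ⟨hgD, h⟩)
      rw [if_pos h1, max_eq_right (not_lt.mp h3)]
    · have h2 : g ∈ F0U := (not_iff.mp hg).mp h1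
      rw [if_neg h1, max_eq_left (Finset.mem_filter.mp h2).2.le]
  -- key bound
  have key : ∑ e ∈ DS, min (c e) (c' e) + |c f - c' f| ≤
      (cutEdges E U' \ F').sum c + F'.sum c' := by
    calc ∑ e ∈ DS, min (c e) (c' e) + |c f - c' f|
        ≤ ∑ e ∈ DU, min (c e) (c' e) + |c g - c' g| :=
          add_le_add hwS (hfmin g hgD)
      _ ≤ ∑ e ∈ DU, (if e ∈ FU then c' e else c e) := val_ge c c' DU FU g hgD hgmax
      _ = (DU \ FU).sum c + FU.sum c' := (val_split c c' hFU).symm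
      _ ≤ _ := hFUle
  have habs : 0 ≤ |c f - c' f| := abs_nonneg _
  by_cases hpar : Odd ((T ∩ S).card + F0S.card)
  · refine ⟨F0S, Finset.filter_subset _ _, hpar, ?_⟩
    rw [val_split c c' (Finset.filter_subset _ _)]
    rw [val_F0 c c' DS]
    linarith
  · by_cases hcf : c' f < c f
    · -- f ∈ F0S; take F = F0S.erase f
      have hfF0 : f ∈ F0S := Finset.mem_filter.mpr ⟨hfS, hcf⟩
      refine ⟨F0S.erase f, (Finset.erase_subset _ _).trans (Finset.filter_subset _ _), ?_, ?_⟩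
      · have hcard : (F0S.erase f).card = F0S.card - 1 := Finset.card_erase_of_mem hfF0
        have hpos : 1 ≤ F0S.card := Finset.card_pos.mpr ⟨f, hfF0⟩
        rw [Nat.odd_iff] at hpar ⊢
        omega
      · rw [val_split c c' ((Finset.erase_subset _ _).trans (Finset.filter_subset _ _))]
        rw [val_toggle c c' DS (F0S.erase f) f hfS ?_ ?_]
        · exact key
        · intro e he hne
          rw [Finset.mem_erase]
          simp [hne, hF0S, Finset.mem_filter, he]
        · rw [if_neg (fun h => (Finset.mem_erase.mp h).1 rfl), max_eq_left hcf.le]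
    · -- f ∉ F0S; take F = insert f F0S
      have hfF0 : f ∉ F0S := fun h => hcf (Finset.mem_filter.mp h).2
      have hsub : insert f F0S ⊆ DS := Finset.insert_subset hfS (Finset.filter_subset _ _)
      refine ⟨insert f F0S, hsub, ?_, ?_⟩
      · have hcard : (insert f F0S).card = F0S.card + 1 := Finset.card_insert_of_notMem hfF0
        rw [Nat.odd_iff] at hpar ⊢
        omega
      · rw [val_split c c' hsub]
        rw [val_toggle c c' DS (insert f F0S) f hfS ?_ ?_]
        · exact key
        · intro e he hne
          rw [Finset.mem_insert]
          simp [hne, hF0S, Finset.mem_filter, he]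
        · rw [if_pos (Finset.mem_insert_self _ _), max_eq_right (not_lt.mp hcf)]
end

section
/- The function U ↦ β(U) (minimum blossom value over all F) is not in general submodular: there exist a finite graph G, a set T, and weights c, c' ∈ ℚ≥0^E such that β(U ∪ W) + β(U ∩ W) > β(U) + β(W) for some U, W ⊆ V for which all four sets admit blossoms. -/
open scoped Classical

/-- `r` is the minimum blossom value `β(U)` of the set `U`. -/
noncomputable def IsBetaMin {V : Type*} [Fintype V] [DecidableEq V]
    (E : Finset (V × V)) (c c' : V × V → ℚ) (T : Finset V) (U : Finset V) (r : ℚ) : Prop :=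
  (∃ F ⊆ cutEdges E U, Odd ((T ∩ U).card + F.card) ∧
      (cutEdges E U \ F).sum c + F.sum c' = r) ∧
  (∀ F ⊆ cutEdges E U, Odd ((T ∩ U).card + F.card) →
      r ≤ (cutEdges E U \ F).sum c + F.sum c')

lemma cut_eq (S : Finset (Fin 4)) (h2 : (2:Fin 4) ∈ S) (h3 : (3:Fin 4) ∉ S) :
    cutEdges {((2:Fin 4), 3)} S = {((2:Fin 4), 3)} := by
  simp [cutEdges, Finset.filter_singleton, h2, h3]

lemma beta0 (T S : Finset (Fin 4)) (hodd : Odd (T ∩ S).card) :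
    IsBetaMin {((2:Fin 4), 3)} (fun _ => 0) (fun _ => 1) T S 0 := by
  constructor
  · exact ⟨∅, Finset.empty_subset _, by simpa using hodd, by simp⟩
  · intro F hF h
    have h1 : (cutEdges {((2:Fin 4), 3)} S \ F).sum (fun _ => (0:ℚ)) = 0 :=
      Finset.sum_const_zero
    have h2 : (0:ℚ) ≤ F.sum (fun _ => (1:ℚ)) :=
      Finset.sum_nonneg fun _ _ => zero_le_one
    rw [h1, zero_add]; exact h2

lemma beta1 (T S : Finset (Fin 4)) (h2 : (2:Fin 4) ∈ S) (h3 : (3:Fin 4) ∉ S)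
    (heven : ¬ Odd (T ∩ S).card) :
    IsBetaMin {((2:Fin 4), 3)} (fun _ => 0) (fun _ => 1) T S 1 := by
  unfold IsBetaMin
  rw [cut_eq S h2 h3]
  constructor
  · refine ⟨{((2:Fin 4), 3)}, Finset.Subset.refl _, ?_, by simp⟩
    simpa [Nat.odd_add] using (Nat.not_odd_iff_even.mp heven)
  · intro F hF hodd
    rcases Finset.subset_singleton_iff.mp hF with rfl | rfl
    · simp at hodd; exact absurd hodd heven
    · simp

/-- The function `U ↦ β(U)` is not in general submodular: there is a finite graph with
weights and sets `U`, `W` (all four relevant sets admitting blossoms) on which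
submodularity fails. -/
theorem stmt_11 :
    ∃ (n : ℕ) (E : Finset (Fin n × Fin n)) (T : Finset (Fin n))
      (c c' : Fin n × Fin n → ℚ),
      (∀ e, 0 ≤ c e) ∧ (∀ e, 0 ≤ c' e) ∧
      ∃ (U W : Finset (Fin n)) (bU bW bUW bUI : ℚ),
        IsBetaMin E c c' T U bU ∧ IsBetaMin E c c' T W bW ∧
        IsBetaMin E c c' T (U ∪ W) bUW ∧ IsBetaMin E c c' T (U ∩ W) bUI ∧
        bU + bW < bUW + bUI := by
  refine ⟨4, {((2:Fin 4), 3)}, {0, 1}, fun _ => 0, fun _ => 1,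
    fun _ => le_refl 0, fun _ => zero_le_one, {0, 2}, {1, 2}, 0, 0, 1, 1,
    beta0 _ _ (by decide), beta0 _ _ (by decide),
    beta1 _ _ (by decide) (by decide) (by decide),
    beta1 _ _ (by decide) (by decide) (by decide), by norm_num⟩
end

section
/- Reduction of separation to blossom minimization: with the construction G* (add vertex v joined to all u ∈ V), capacities (c_e, c'_e) := (x_e, u_e − x_e) if u_e is odd and (min(x_e, u_e − x_e), ∞) if u_e is even, c_{uv} := s_u, c'_{uv} := ∞, and T := {u ∈ V : b_u odd} ∪ ({v} if ∑_u b_u is odd), the following holds: for every blossom (U,F) in G* with v ∉ U and finite β(U,F), setting W := U ∩ V, the inequality ∑_{u∈W} s_u + ∑_{e∈δ_G(W)\F'} x_e + ∑_{f∈F'} (u_f − x_f) ≥ 1 is violated by exactly 1 − β(U,F), where F' arises from F by choosing for each even-capacity edge e ∈ F the cheaper of x_e and u_e − x_e appropriately; conversely every violated inequality of this form yields a blossom of value less than 1. -/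
/-!
Since `v ∉ U`, the cut of `U` in `G*` consists of the edges of `G` crossing `W = U ∩ V` and the
slack edges `av`, `a ∈ W`; a blossom of finite value can only put odd-capacity edges of `G` into
`F`. Both `β(U,F)` and the left-hand side of the odd-cut inequality are `∑_{a∈W} s_a` plus a sum
over `δ(W)` of a per-edge cost, and the two costs can differ only on even-capacity edges: there
`β` pays `min(x_e, u_e − x_e)` while the inequality pays `x_e` or `u_e − x_e` according to `F'`.
Choosing the cheaper one (as `assocF` does) gives equality, any other choice gives `β ≤ LHS`.
The parities agree because the odd-capacity edges of `F'` are exactly those coming from `F`.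
-/

open scoped Classical

/-- The set of edges of `E` incident to the vertex `i`. -/
noncomputable def incEdges {V : Type*} [Fintype V] [DecidableEq V]
    (E : Finset (V × V)) (i : V) : Finset (V × V) :=
  E.filter (fun e => e.1 = i ∨ e.2 = i)

/-- The set of edges of `E` with both endpoints in `W`. -/
noncomputable def inEdges {V : Type*} [Fintype V] [DecidableEq V]
    (E : Finset (V × V)) (W : Finset V) : Finset (V × V) :=
  E.filter (fun e => e.1 ∈ W ∧ e.2 ∈ W)

/-- The edge set of the auxiliary graph `G*`: the edges of `G` (embedded via `some`)
together with an edge from every vertex of `G` to the new vertex `none`. -/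
noncomputable def starEdges {V : Type*} [Fintype V] [DecidableEq V]
    (E : Finset (V × V)) : Finset (Option V × Option V) :=
  E.image (fun e => ((some e.1 : Option V), (some e.2 : Option V))) ∪
    Finset.univ.image (fun a : V => ((some a : Option V), (none : Option V)))

/-- The capacity `c` on `G*`: `x_e` on odd-capacity edges, `min(x_e, u_e − x_e)` on
even-capacity edges, and the degree slack `s_a` on the edge from `a` to the new vertex. -/
noncomputable def starC {V : Type*} [Fintype V] [DecidableEq V]
    (E : Finset (V × V)) (b : V → ℤ) (u : V × V → ℤ) (x : V × V → ℚ) :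
    Option V × Option V → WithTop ℚ
  | (some a, some a') =>
      if Odd (u (a, a')) then ((x (a, a') : ℚ) : WithTop ℚ)
      else ((min (x (a, a')) ((u (a, a') : ℚ) - x (a, a')) : ℚ) : WithTop ℚ)
  | (some a, none) => (((b a : ℚ) - (incEdges E a).sum x : ℚ) : WithTop ℚ)
  | _ => 0

/-- The capacity `c'` on `G*`: `u_e − x_e` on odd-capacity edges and `∞` elsewhere. -/
noncomputable def starC' {V : Type*} [Fintype V] [DecidableEq V]
    (u : V × V → ℤ) (x : V × V → ℚ) : Option V × Option V → WithTop ℚ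
  | (some a, some a') =>
      if Odd (u (a, a')) then (((u (a, a') : ℚ) - x (a, a') : ℚ) : WithTop ℚ) else ⊤
  | _ => ⊤

/-- The terminal set `T`: odd-`b` vertices, plus the new vertex iff `∑ b` is odd. -/
noncomputable def starT {V : Type*} [Fintype V] [DecidableEq V] (b : V → ℤ) :
    Finset (Option V) :=
  (Finset.univ.filter (fun a : V => Odd (b a))).image some ∪
    (if Odd (Finset.univ.sum b) then {(none : Option V)} else ∅)

/-- Left-hand side of the rewritten blossom inequality \eqref{eq:oddcut}:
`∑_{a∈W} s_a + ∑_{e∈δ(W)∖F'} x_e + ∑_{f∈F'} (u_f − x_f)`. -/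
noncomputable def oddcutLHS {V : Type*} [Fintype V] [DecidableEq V]
    (E : Finset (V × V)) (b : V → ℤ) (u : V × V → ℤ) (x : V × V → ℚ)
    (W : Finset V) (F' : Finset (V × V)) : ℚ :=
  W.sum (fun i => (b i : ℚ) - (incEdges E i).sum x) +
    (cutEdges E W \ F').sum x + F'.sum (fun f => (u f : ℚ) - x f)

/-- The edge set `F'` of `G` associated with a blossom `(U,F)` of `G*`: the
(odd-capacity) edges of `F`, together with the even-capacity edges crossing `U` for
which `u_e − x_e` is the cheaper of the two choices. -/
noncomputable def assocF {V : Type*} [Fintype V] [DecidableEq V]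
    (E : Finset (V × V)) (u : V × V → ℤ) (x : V × V → ℚ)
    (U : Finset (Option V)) (F : Finset (Option V × Option V)) : Finset (V × V) :=
  E.filter (fun e => ((some e.1 : Option V), (some e.2 : Option V)) ∈ F ∨
    (((some e.1 : Option V), (some e.2 : Option V)) ∈ cutEdges (starEdges E) U ∧
      ¬ Odd (u e) ∧ (u e : ℚ) - x e < x e))

/-- The value `β(U,F)` of a blossom of `G*`. -/
noncomputable def starBeta {V : Type*} [Fintype V] [DecidableEq V]
    (E : Finset (V × V)) (b : V → ℤ) (u : V × V → ℤ) (x : V × V → ℚ)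
    (U : Finset (Option V)) (F : Finset (Option V × Option V)) : WithTop ℚ :=
  (cutEdges (starEdges E) U \ F).sum (starC E b u x) + F.sum (starC' u x)

open Finset

lemma Int.odd_sum_iff_odd_card_odd {ι : Type*} (s : Finset ι) (f : ι → ℤ) :
    Odd (∑ i ∈ s, f i) ↔ Odd #{i ∈ s | Odd (f i)} := by
  have hmod : ∀ i, f i % 2 = if Odd (f i) then 1 else 0 := fun i => by
    split_ifs with h
    · exact Int.odd_iff.mp h
    · exact Int.even_iff.mp (Int.not_odd_iff_even.mp h)
  rw [Int.odd_iff, sum_int_mod, sum_congr rfl (fun i _ => hmod i), sum_boole, Nat.odd_iff]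
  omega

lemma prodMap_some_injective {V : Type*} :
    Function.Injective (Prod.map some some : V × V → Option V × Option V) :=
  (Option.some_injective V).prodMap (Option.some_injective V)

lemma some_none_injective {V : Type*} :
    Function.Injective (fun a : V => ((some a : Option V), (none : Option V))) :=
  fun _ _ h => Option.some_injective V (congrArg Prod.fst h)

lemma disjoint_image_prodMap_some_image_some_none {V : Type*} [DecidableEq V]
    (s : Finset (V × V)) (W : Finset V) :
    Disjoint (s.image (Prod.map some some)) (W.image fun a => ((some a : Option V), none)) := by
  simp only [disjoint_left, mem_image]
  rintro _ ⟨e, -, rfl⟩ ⟨a, -, h⟩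
  simp [Prod.ext_iff] at h

def edgeCost {α : Type*} (u : α → ℤ) (x : α → ℚ) (e : α) : ℚ :=
  if Odd (u e) then x e else min (x e) ((u e : ℚ) - x e)

lemma piecewise_filter_odd_edgeCost_le {α : Type*} [DecidableEq α] (u : α → ℤ) (x : α → ℚ)
    (F' : Finset α) (e : α) :
    {e ∈ F' | Odd (u e)}.piecewise (fun e => (u e : ℚ) - x e) (edgeCost u x) e ≤
      F'.piecewise (fun e => (u e : ℚ) - x e) x e := by
  by_cases he : e ∈ F' <;> by_cases ho : Odd (u e) <;> simp [piecewise, edgeCost, he, ho]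

section Blossom

variable {V : Type*} [Fintype V] [DecidableEq V]

lemma filter_some_mem_image (W : Finset V) :
    univ.filter (fun a : V => some a ∈ W.image some) = W := by
  ext a; simp

lemma exists_eq_image_some {U : Finset (Option V)} (hU : none ∉ U) :
    ∃ W : Finset V, U = W.image some := by
  refine ⟨univ.filter (fun a : V => some a ∈ U), ?_⟩
  ext (_ | a) <;> simp [hU]

lemma prodMap_some_mem_starEdges {E : Finset (V × V)} {e : V × V} :
    Prod.map some some e ∈ starEdges E ↔ e ∈ E := by
  simp [starEdges, Prod.ext_iff]

lemma prodMap_some_mem_cutEdges_starEdges {E : Finset (V × V)} {W : Finset V} {e : V × V} :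
    Prod.map some some e ∈ cutEdges (starEdges E) (W.image some) ↔ e ∈ cutEdges E W := by
  simp [cutEdges, prodMap_some_mem_starEdges]

lemma cutEdges_starEdges_image_some (E : Finset (V × V)) (W : Finset V) :
    cutEdges (starEdges E) (W.image some) =
      (cutEdges E W).image (Prod.map some some) ∪ W.image (fun a => (some a, none)) := by
  ext ⟨_ | a, _ | a'⟩ <;> simp [cutEdges, starEdges, Prod.ext_iff]

lemma image_prodMap_some_subset_cutEdges_starEdges {E : Finset (V × V)} {W : Finset V}
    {F₀ : Finset (V × V)} (hF₀ : F₀ ⊆ cutEdges E W) :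
    F₀.image (Prod.map some some) ⊆ cutEdges (starEdges E) (W.image some) := by
  rw [cutEdges_starEdges_image_some]
  exact (image_subset_image hF₀).trans subset_union_left

lemma card_starT_inter_image_some (b : V → ℤ) (W : Finset V) :
    (starT b ∩ W.image some).card = #{a ∈ W | Odd (b a)} := by
  have : starT b ∩ W.image some = {a ∈ W | Odd (b a)}.image some := by
    ext (_ | a) <;> simp only [starT] <;> split_ifs <;> simp [and_comm]
  rw [this, card_image_of_injective _ (Option.some_injective V)]

lemma odd_card_starT_inter_add_card_iff (b : V → ℤ) (u : V × V → ℤ) (W : Finset V)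
    (F' : Finset (V × V)) :
    Odd ((starT b ∩ W.image some).card +
        ({e ∈ F' | Odd (u e)}.image (Prod.map some some)).card) ↔
      Odd (W.sum b + F'.sum u) := by
  rw [card_starT_inter_image_some, card_image_of_injective _ prodMap_some_injective,
    Nat.odd_add, Int.odd_add, ← Nat.not_odd_iff_even, ← Int.not_odd_iff_even,
    Int.odd_sum_iff_odd_card_odd, Int.odd_sum_iff_odd_card_odd]

lemma starC_prodMap_some (E : Finset (V × V)) (b : V → ℤ) (u : V × V → ℤ) (x : V × V → ℚ)
    (e : V × V) : starC E b u x (Prod.map some some e) = edgeCost u x e := by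
  obtain ⟨a, a'⟩ := e
  by_cases h : Odd (u (a, a')) <;> simp [starC, edgeCost, h]

lemma starC'_prodMap_some {u : V × V → ℤ} (x : V × V → ℚ) {e : V × V} (h : Odd (u e)) :
    starC' u x (Prod.map some some e) = ((u e : ℚ) - x e : ℚ) := by
  obtain ⟨a, a'⟩ := e
  simp [starC', h]

lemma exists_odd_of_starC'_lt_top {u : V × V → ℤ} {x : V × V → ℚ} {f : Option V × Option V}
    (hf : starC' u x f < ⊤) : ∃ e, Odd (u e) ∧ Prod.map some some e = f := by
  obtain ⟨_ | a, _ | a'⟩ := f <;> simp only [starC', lt_self_iff_false] at hf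
  split_ifs at hf with h
  · exact ⟨(a, a'), h, rfl⟩
  · exact absurd hf (lt_irrefl _)

lemma starBeta_image_some (E : Finset (V × V)) (b : V → ℤ) (u : V × V → ℤ) (x : V × V → ℚ)
    {W : Finset V} {F₀ : Finset (V × V)} (hF₀ : F₀ ⊆ cutEdges E W)
    (hodd : ∀ e ∈ F₀, Odd (u e)) :
    starBeta E b u x (W.image some) (F₀.image (Prod.map some some)) =
      ((∑ a ∈ W, ((b a : ℚ) - (incEdges E a).sum x) +
        ∑ e ∈ cutEdges E W, F₀.piecewise (fun e => (u e : ℚ) - x e) (edgeCost u x) e : ℚ) :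
          WithTop ℚ) := by
  set F := F₀.image (Prod.map some some)
  have hF : F ⊆ cutEdges (starEdges E) (W.image some) :=
    image_prodMap_some_subset_cutEdges_starEdges hF₀
  have hsplit := sum_piecewise (cutEdges (starEdges E) (W.image some)) F (starC' u x)
    (starC E b u x)
  rw [inter_eq_right.mpr hF] at hsplit
  rw [starBeta, add_comm, ← hsplit, cutEdges_starEdges_image_some,
    sum_union (disjoint_image_prodMap_some_image_some_none _ _),
    sum_image prodMap_some_injective.injOn, sum_image some_none_injective.injOn,
    add_comm, WithTop.coe_add, WithTop.coe_sum, WithTop.coe_sum]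
  congr 1
  · refine sum_congr rfl fun a _ => ?_
    rw [piecewise_eq_of_notMem _ _ _ (by simp [F, Prod.ext_iff])]
    rfl
  · refine sum_congr rfl fun e _ => ?_
    by_cases he : e ∈ F₀
    · rw [piecewise_eq_of_mem _ _ _ (mem_image_of_mem _ he), piecewise_eq_of_mem _ _ _ he,
        starC'_prodMap_some x (hodd e he)]
    · rw [piecewise_eq_of_notMem _ _ _ (prodMap_some_injective.mem_finset_image.not.mpr he),
        piecewise_eq_of_notMem _ _ _ he, starC_prodMap_some]

lemma oddcutLHS_eq_sum_piecewise (E : Finset (V × V)) (b : V → ℤ) (u : V × V → ℤ)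
    (x : V × V → ℚ) {W : Finset V} {F' : Finset (V × V)} (hF' : F' ⊆ cutEdges E W) :
    oddcutLHS E b u x W F' = ∑ a ∈ W, ((b a : ℚ) - (incEdges E a).sum x) +
      ∑ e ∈ cutEdges E W, F'.piecewise (fun e => (u e : ℚ) - x e) x e := by
  rw [oddcutLHS, add_assoc, sum_piecewise, inter_eq_right.mpr hF', add_comm (∑ e ∈ F', _)]

lemma exists_eq_image_of_starBeta_lt_top {E : Finset (V × V)} {b : V → ℤ} {u : V × V → ℤ}
    {x : V × V → ℚ} {W : Finset V} {F : Finset (Option V × Option V)}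
    (hF : F ⊆ cutEdges (starEdges E) (W.image some))
    (hβ : starBeta E b u x (W.image some) F < ⊤) :
    ∃ F₀ ⊆ cutEdges E W, (∀ e ∈ F₀, Odd (u e)) ∧ F = F₀.image (Prod.map some some) := by
  have hodd : ∀ f ∈ F, ∃ e, Odd (u e) ∧ Prod.map some some e = f := fun f hf =>
    exists_odd_of_starC'_lt_top (WithTop.sum_lt_top.mp (WithTop.add_lt_top.mp hβ).2 f hf)
  refine ⟨{e ∈ cutEdges E W | Prod.map some some e ∈ F}, filter_subset _ _, ?_, ?_⟩
  · intro e he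
    obtain ⟨e', he', hee'⟩ := hodd _ (mem_filter.mp he).2
    rwa [← prodMap_some_injective hee']
  · ext f
    refine ⟨fun hf => ?_, fun hf => ?_⟩
    · obtain ⟨e, -, rfl⟩ := hodd f hf
      exact mem_image_of_mem _
        (mem_filter.mpr ⟨prodMap_some_mem_cutEdges_starEdges.mp (hF hf), hf⟩)
    · obtain ⟨e, he, rfl⟩ := mem_image.mp hf
      exact (mem_filter.mp he).2

lemma assocF_subset_cutEdges {E : Finset (V × V)} {u : V × V → ℤ} {x : V × V → ℚ}
    {W : Finset V} {F : Finset (Option V × Option V)}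
    (hF : F ⊆ cutEdges (starEdges E) (W.image some)) :
    assocF E u x (W.image some) F ⊆ cutEdges E W := by
  intro e he
  rcases (mem_filter.mp he).2 with h | h
  · exact prodMap_some_mem_cutEdges_starEdges.mp (hF h)
  · exact prodMap_some_mem_cutEdges_starEdges.mp h.1

lemma mem_assocF_image_iff {E : Finset (V × V)} {u : V × V → ℤ} {x : V × V → ℚ}
    {W : Finset V} {F₀ : Finset (V × V)} (hF₀ : F₀ ⊆ cutEdges E W) {e : V × V} :
    e ∈ assocF E u x (W.image some) (F₀.image (Prod.map some some)) ↔
      e ∈ F₀ ∨ e ∈ cutEdges E W ∧ ¬ Odd (u e) ∧ (u e : ℚ) - x e < x e := by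
  have hE : e ∈ cutEdges E W → e ∈ E := fun h => (mem_filter.mp h).1
  have := @hF₀ e
  simp only [assocF, mem_filter]
  rw [show ((some e.1 : Option V), (some e.2 : Option V)) = Prod.map some some e from rfl,
    prodMap_some_injective.mem_finset_image, prodMap_some_mem_cutEdges_starEdges]
  tauto

lemma filter_odd_assocF_image {E : Finset (V × V)} {u : V × V → ℤ} {x : V × V → ℚ}
    {W : Finset V} {F₀ : Finset (V × V)} (hF₀ : F₀ ⊆ cutEdges E W)
    (hodd : ∀ e ∈ F₀, Odd (u e)) :
    {e ∈ assocF E u x (W.image some) (F₀.image (Prod.map some some)) | Odd (u e)} = F₀ := by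
  ext e
  rw [mem_filter, mem_assocF_image_iff hF₀]
  have := hodd e
  tauto

lemma piecewise_assocF_image {E : Finset (V × V)} {u : V × V → ℤ} {x : V × V → ℚ}
    {W : Finset V} {F₀ : Finset (V × V)} (hF₀ : F₀ ⊆ cutEdges E W)
    {e : V × V} (he : e ∈ cutEdges E W) :
    (assocF E u x (W.image some) (F₀.image (Prod.map some some))).piecewise
        (fun e => (u e : ℚ) - x e) x e =
      F₀.piecewise (fun e => (u e : ℚ) - x e) (edgeCost u x) e := by
  by_cases he₀ : e ∈ F₀
  · simp [piecewise, mem_assocF_image_iff hF₀, he₀]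
  · by_cases ho : Odd (u e)
    · simp [piecewise, mem_assocF_image_iff hF₀, edgeCost, he₀, ho]
    · by_cases hlt : (u e : ℚ) - x e < x e
      · simp [piecewise, mem_assocF_image_iff hF₀, edgeCost, he, he₀, ho, hlt, hlt.le]
      · simp [piecewise, mem_assocF_image_iff hF₀, edgeCost, he₀, ho, hlt, not_lt.mp hlt]

end Blossom

theorem stmt_15_general {V : Type*} [Fintype V] [DecidableEq V]
    (E : Finset (V × V)) (b : V → ℤ) (u : V × V → ℤ) (x : V × V → ℚ) :
    (∀ U : Finset (Option V), (none : Option V) ∉ U →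
      ∀ F ⊆ cutEdges (starEdges E) U, Odd ((starT b ∩ U).card + F.card) →
        starBeta E b u x U F < ⊤ →
          assocF E u x U F ⊆ cutEdges E (Finset.univ.filter (fun a : V => some a ∈ U)) ∧
          Odd ((Finset.univ.filter (fun a : V => some a ∈ U)).sum b +
            (assocF E u x U F).sum u) ∧
          ((oddcutLHS E b u x (Finset.univ.filter (fun a : V => some a ∈ U))
              (assocF E u x U F) : ℚ) : WithTop ℚ) = starBeta E b u x U F) ∧
    (∀ W : Finset V, ∀ F' ⊆ cutEdges E W, Odd (W.sum b + F'.sum u) →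
      oddcutLHS E b u x W F' < 1 →
        ∃ U : Finset (Option V), (none : Option V) ∉ U ∧
          ∃ F ⊆ cutEdges (starEdges E) U, Odd ((starT b ∩ U).card + F.card) ∧
            starBeta E b u x U F < 1) := by
  refine ⟨fun U hU F hF hpar hβ => ?_, fun W F' hF' hpar hlt => ?_⟩
  · obtain ⟨W, rfl⟩ := exists_eq_image_some hU
    obtain ⟨F₀, hF₀, hodd, rfl⟩ := exists_eq_image_of_starBeta_lt_top hF hβ
    have hassoc := assocF_subset_cutEdges (u := u) (x := x) hF
    rw [filter_some_mem_image]
    refine ⟨hassoc, ?_, ?_⟩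
    · rwa [← odd_card_starT_inter_add_card_iff, filter_odd_assocF_image hF₀ hodd]
    · rw [starBeta_image_some E b u x hF₀ hodd, oddcutLHS_eq_sum_piecewise E b u x hassoc,
        sum_congr rfl fun e he => piecewise_assocF_image hF₀ he]
  · have hF₀ : {e ∈ F' | Odd (u e)} ⊆ cutEdges E W := (filter_subset _ _).trans hF'
    refine ⟨W.image some, by simp, _, image_prodMap_some_subset_cutEdges_starEdges hF₀,
      (odd_card_starT_inter_add_card_iff b u W F').mpr hpar, ?_⟩
    rw [starBeta_image_some E b u x hF₀ fun e he => (mem_filter.mp he).2]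
    refine WithTop.coe_lt_one.mpr (lt_of_le_of_lt ?_ hlt)
    rw [oddcutLHS_eq_sum_piecewise E b u x hF']
    gcongr with e
    exact piecewise_filter_odd_edgeCost_le u x F' e

/-- Reduction of blossom separation to blossom minimization on `G*`: every blossom
`(U,F)` of `G*` avoiding the new vertex and of finite value corresponds, via
`W := U ∩ V` and `F' := assocF`, to an inequality `oddcutLHS ≥ 1` of the required
parity whose left-hand side equals `β(U,F)` (so it is violated by exactly
`1 − β(U,F)`); conversely, every violated inequality of this form yields a blossom of
`G*` of value less than `1`. -/
theorem stmt_15 {V : Type*} [Fintype V] [DecidableEq V]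
    (E : Finset (V × V)) (hloop : ∀ e ∈ E, e.1 ≠ e.2)
    (b : V → ℤ) (hb : ∀ i, 0 ≤ b i) (u : V × V → ℤ) (hu : ∀ e, 0 ≤ u e)
    (x : V × V → ℚ) (hx0 : ∀ e, 0 ≤ x e) (hxu : ∀ e, x e ≤ (u e : ℚ))
    (hdeg : ∀ i : V, (incEdges E i).sum x ≤ (b i : ℚ)) :
    (∀ U : Finset (Option V), (none : Option V) ∉ U →
      ∀ F ⊆ cutEdges (starEdges E) U, Odd ((starT b ∩ U).card + F.card) →
        starBeta E b u x U F < ⊤ →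
          assocF E u x U F ⊆ cutEdges E (Finset.univ.filter (fun a : V => some a ∈ U)) ∧
          Odd ((Finset.univ.filter (fun a : V => some a ∈ U)).sum b +
            (assocF E u x U F).sum u) ∧
          ((oddcutLHS E b u x (Finset.univ.filter (fun a : V => some a ∈ U))
              (assocF E u x U F) : ℚ) : WithTop ℚ) = starBeta E b u x U F) ∧
    (∀ W : Finset V, ∀ F' ⊆ cutEdges E W, Odd (W.sum b + F'.sum u) →
      oddcutLHS E b u x W F' < 1 →
        ∃ U : Finset (Option V), (none : Option V) ∉ U ∧
          ∃ F ⊆ cutEdges (starEdges E) U, Odd ((starT b ∩ U).card + F.card) ∧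
            starBeta E b u x U F < 1) :=
  stmt_15_general E b u x
end
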